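/- arXiv:1101.1447 — 3 statements merged into one kernel-verified Lean document; each statement's English description precedes it below -/
import Mathlib

section
/- Let g(ξ) = |ξ|^{-1} exp(2A|ξ| + 2b₁ξ₁ + 2C) for ξ ∈ ℝ^d \ {0}, where A < 0, b₁ > 0, C ∈ ℝ, and d ≥ 2. Then ∫_{ℝ^d} g(ξ) ξ₁ dξ > 0. -/
/-!
The reflection `ξ ↦ -ξ` preserves Lebesgue measure and `‖ξ‖` and flips the sign of `ξ₁`, so twice
the integral equals the integral of `‖ξ‖⁻¹ e^{2A‖ξ‖+2C} · ξ₁ (e^{2b₁ξ₁} - e^{-2b₁ξ₁})`, which is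
positive off the null hyperplane `ξ₁ = 0` since `b₁ > 0`. Integrability comes from the bound
`|g ξ · ξ₁| ≤ e^{2C} e^{-2(-A-b₁)‖ξ‖}` with `-A - b₁ > 0`.
-/

open MeasureTheory Real

theorem integral_pos_of_ae_pos_add_comp_neg {G : Type*} [MeasurableSpace G] [AddGroup G]
    [MeasurableNeg G] {μ : Measure G} [μ.IsNegInvariant] [NeZero μ] {f : G → ℝ}
    (hf : Integrable f μ) (hpos : ∀ᵐ x ∂μ, 0 < f x + f (-x)) : 0 < ∫ x, f x ∂μ := by
  have hsum : ∫ x, (f x + f (-x)) ∂μ = 2 * ∫ x, f x ∂μ := by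
    rw [integral_add hf hf.comp_neg, integral_neg_eq_self]; ring
  have hsupp : Function.support (fun x => f x + f (-x)) =ᵐ[μ] Set.univ :=
    Filter.eventuallyEq_univ.mpr (hpos.mono fun x hx => hx.ne')
  have hsum_pos : 0 < ∫ x, (f x + f (-x)) ∂μ := by
    rw [integral_pos_iff_support_of_nonneg_ae (hpos.mono fun x hx => hx.le) (hf.add hf.comp_neg),
      measure_congr hsupp]
    exact Measure.measure_univ_pos.mpr (NeZero.ne μ)
  linarith

theorem LinearMap.ae_apply_ne_zero {E : Type*} [NormedAddCommGroup E] [NormedSpace ℝ E]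
    [MeasurableSpace E] [BorelSpace E] [FiniteDimensional ℝ E] (μ : Measure E)
    [μ.IsAddHaarMeasure] {L : E →ₗ[ℝ] ℝ} (hL : L ≠ 0) : ∀ᵐ x ∂μ, L x ≠ 0 := by
  simp only [ae_iff, ne_eq, not_not]
  exact Measure.addHaar_submodule μ (LinearMap.ker L) (by simpa using hL)

theorem integrable_exp_neg_mul_norm {E : Type*} [NormedAddCommGroup E] [NormedSpace ℝ E]
    [MeasurableSpace E] [BorelSpace E] [FiniteDimensional ℝ E] (μ : Measure E)
    [μ.IsAddHaarMeasure] {c : ℝ} (hc : 0 < c) : Integrable (fun x => exp (-c * ‖x‖)) μ := by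
  rcases subsingleton_or_nontrivial E with hE | hE
  · exact Integrable.of_finite
  rw [integrable_fun_norm_addHaar μ (f := fun r => exp (-c * r))]
  refine (integrableOn_rpow_mul_exp_neg_mul_rpow (p := 1) (s := (Module.finrank ℝ E - 1 : ℕ))
    (neg_one_lt_zero.trans_le (Nat.cast_nonneg _)) one_pos hc).congr_fun
    (fun r _ => ?_) measurableSet_Ioi
  simp [rpow_natCast]

theorem mul_exp_sub_exp_neg_pos {s t : ℝ} (hs : 0 < s) (ht : t ≠ 0) :
    0 < t * (exp (s * t) - exp (-(s * t))) := by
  rcases ht.lt_or_gt with ht | ht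
  · exact mul_pos_of_neg_of_neg ht (sub_neg.mpr (exp_lt_exp.mpr (by nlinarith)))
  · exact mul_pos ht (sub_pos.mpr (exp_lt_exp.mpr (by nlinarith)))

theorem EuclideanSpace.ae_apply_ne_zero {ι : Type*} [Fintype ι] (i : ι) :
    ∀ᵐ ξ : EuclideanSpace ℝ ι, ξ i ≠ 0 := by
  classical
  refine LinearMap.ae_apply_ne_zero volume
    (L := (EuclideanSpace.proj i : EuclideanSpace ℝ ι →L[ℝ] ℝ).toLinearMap) fun h => ?_
  simpa using LinearMap.congr_fun h (EuclideanSpace.single i 1)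

theorem integrable_inv_norm_mul_exp_mul_apply {ι : Type*} [Fintype ι] (i : ι) {a b c : ℝ}
    (hab : |b| < -a) :
    Integrable (fun ξ : EuclideanSpace ℝ ι => ‖ξ‖⁻¹ * exp (a * ‖ξ‖ + b * ξ i + c) * ξ i) := by
  have hi : ∀ ξ : EuclideanSpace ℝ ι, |ξ i| ≤ ‖ξ‖ := fun ξ => by
    simpa using PiLp.norm_apply_le ξ i
  refine ((integrable_exp_neg_mul_norm volume (sub_pos.mpr hab)).const_mul (exp c)).mono'
    (by fun_prop) (.of_forall fun ξ => ?_)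
  have hcoord : ‖ξ‖⁻¹ * |ξ i| ≤ 1 := by
    rcases eq_or_ne ξ 0 with rfl | hξ
    · simp
    · exact inv_mul_le_one_of_le₀ (hi ξ) (norm_nonneg ξ)
  have hexp : a * ‖ξ‖ + b * ξ i + c ≤ c + -(-a - |b|) * ‖ξ‖ := by
    nlinarith [neg_abs_le b, le_abs_self b, abs_le.mp (hi ξ), norm_nonneg ξ]
  calc ‖‖ξ‖⁻¹ * exp (a * ‖ξ‖ + b * ξ i + c) * ξ i‖
      = ‖ξ‖⁻¹ * |ξ i| * exp (a * ‖ξ‖ + b * ξ i + c) := by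
        simp only [norm_mul, norm_inv, Real.norm_eq_abs, abs_norm, abs_exp]; ring
    _ ≤ 1 * exp (c + -(-a - |b|) * ‖ξ‖) := by gcongr
    _ = exp c * exp (-(-a - |b|) * ‖ξ‖) := by rw [one_mul, exp_add]

theorem positive_first_moment (d : ℕ) (hd : 2 ≤ d) (A b₁ C : ℝ)
    (hb : 0 < b₁) (hbA : b₁ < -A)
    (g : EuclideanSpace ℝ (Fin d) → ℝ)
    (hg : ∀ ξ : EuclideanSpace ℝ (Fin d), ξ ≠ 0 →
      g ξ = ‖ξ‖⁻¹ * Real.exp (2 * A * ‖ξ‖ + 2 * b₁ * ξ ⟨0, by omega⟩ + 2 * C)) :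
    0 < ∫ ξ : EuclideanSpace ℝ (Fin d), g ξ * ξ ⟨0, by omega⟩ := by
  set i : Fin d := ⟨0, by omega⟩
  have hne : ∀ ξ : EuclideanSpace ℝ (Fin d), ξ i ≠ 0 → ξ ≠ 0 := fun ξ h h0 => h (by simp [h0])
  have hgi : (fun ξ => g ξ * ξ i) =ᵐ[volume]
      fun ξ => ‖ξ‖⁻¹ * exp (2 * A * ‖ξ‖ + 2 * b₁ * ξ i + 2 * C) * ξ i :=
    (EuclideanSpace.ae_apply_ne_zero i).mono fun ξ h => by simp only [hg ξ (hne ξ h)]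
  refine integral_pos_of_ae_pos_add_comp_neg
    ((integrable_inv_norm_mul_exp_mul_apply i ?_).congr hgi.symm) ?_
  · rw [abs_of_pos (by positivity)]
    linarith
  filter_upwards [EuclideanSpace.ae_apply_ne_zero i] with ξ hξ
  rw [hg ξ (hne ξ hξ), hg (-ξ) (neg_ne_zero.mpr (hne ξ hξ))]
  have hsymm : ‖ξ‖⁻¹ * exp (2 * A * ‖ξ‖ + 2 * b₁ * ξ i + 2 * C) * ξ i
      + ‖-ξ‖⁻¹ * exp (2 * A * ‖-ξ‖ + 2 * b₁ * (-ξ) i + 2 * C) * (-ξ) i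
      = ‖ξ‖⁻¹ * exp (2 * A * ‖ξ‖ + 2 * C)
        * (ξ i * (exp (2 * b₁ * ξ i) - exp (-(2 * b₁ * ξ i)))) := by
    simp only [norm_neg, PiLp.neg_apply, mul_neg, add_right_comm _ _ (2 * C), exp_add]
    ring
  rw [hsymm]
  have hξ0 : 0 < ‖ξ‖ := norm_pos_iff.mpr (hne ξ hξ)
  exact mul_pos (by positivity) (mul_exp_sub_exp_neg_pos (by positivity) hξ)
end

section
/- Let d ≥ 2 and let H : {(τ,ξ) ∈ ℝ × ℝ^d : τ > |ξ|} → ℂ be a function satisfying H(X)H(Y) = H(X+Y) for all X, Y in the open solid light cone, with H continuous and H not identically zero. Then there exist a ∈ ℂ and b ∈ ℂ^d such that H(τ,ξ) = exp(aτ + b·ξ) for all (τ,ξ) with τ > |ξ|. -/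
/-!
Since the open cone `C` is closed under addition, a zero `x` of `H` would propagate to `x + C`,
which contains a multiple `n • x₀` of every `x₀ ∈ C`, where `H (n • x₀) = H x₀ ^ n`; so `H` has
no zeros. As `C - C` is the whole space, `ψ v := H (w + v) / H w` (for `w, w + v ∈ C`) is then
a well-defined continuous additive character of `ℝ^{1+d}` extending `H`. On each line `t ↦ t • v`
it is a continuous character of `ℝ`, which is differentiable (it is a difference quotient of its
own primitive) with `ψ' = c ψ`, hence `exp (c t)`; the exponents `c v` depend linearly on `v`.
-/

open Filter Topology intervalIntegral Complex

lemma hasDerivAt_cexp_mul_ofReal (c : ℂ) (t : ℝ) :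
    HasDerivAt (fun t : ℝ => cexp (c * t)) (c * cexp (c * t)) t := by
  simpa [mul_comm] using ((hasDerivAt_id t).ofReal_comp.const_mul c).cexp

lemma eq_of_forall_cexp_mul_ofReal_eq {c c' : ℂ} (h : ∀ t : ℝ, cexp (c * t) = cexp (c' * t)) :
    c = c' := by
  have hc' := hasDerivAt_cexp_mul_ofReal c' 0
  rw [← funext h] at hc'
  simpa using (hasDerivAt_cexp_mul_ofReal c 0).unique hc'

namespace AddChar

lemma exists_hasDerivAt_mul_self (ψ : AddChar ℝ ℂ) (hψ : Continuous ψ) :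
    ∃ c : ℂ, ∀ t, HasDerivAt ψ (c * ψ t) t := by
  set F : ℝ → ℂ := fun t => ∫ s in (0 : ℝ)..t, ψ s
  have hF : ∀ t, HasDerivAt F (ψ t) t := fun t =>
    integral_hasDerivAt_right (hψ.intervalIntegrable 0 t)
      hψ.stronglyMeasurable.stronglyMeasurableAtFilter hψ.continuousAt
  obtain ⟨δ, hδ⟩ : ∃ δ, F δ ≠ 0 := by
    by_contra! hF0
    have h := hF 0
    rw [funext hF0, map_zero_eq_one] at h
    exact one_ne_zero (h.unique (hasDerivAt_const 0 0))
  -- translating the integral: `F (t + δ) - F t = ∫ s in 0..δ, ψ (t + s) = ψ t * F δ`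
  have hshift : ∀ t, ψ t = (F (t + δ) - F t) / F δ := fun t => by
    have h := integral_comp_add_left (a := 0) (b := δ) ψ t
    simp only [map_add_eq_mul, intervalIntegral.integral_const_mul, add_zero] at h
    rw [eq_div_iff hδ, integral_interval_sub_left (hψ.intervalIntegrable _ _)
      (hψ.intervalIntegrable _ _), h]
  refine ⟨(ψ δ - 1) / F δ, fun t => ?_⟩
  refine HasDerivAt.congr_of_eventuallyEq ?_ (Eventually.of_forall hshift)
  refine ((((hF (t + δ)).comp_add_const t δ).sub (hF t)).div_const (F δ)).congr_deriv ?_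
  rw [map_add_eq_mul]
  ring

lemma exists_eq_cexp_mul (ψ : AddChar ℝ ℂ) (hψ : Continuous ψ) :
    ∃ c : ℂ, ∀ t : ℝ, ψ t = cexp (c * t) := by
  obtain ⟨c, hc⟩ := ψ.exists_hasDerivAt_mul_self hψ
  have hconst : ∀ t, HasDerivAt (fun t => ψ t * cexp (-c * t)) 0 t := fun t => by
    refine ((hc t).mul (hasDerivAt_cexp_mul_ofReal (-c) t)).congr_deriv ?_
    ring
  refine ⟨c, fun t => ?_⟩
  have h := is_const_of_deriv_eq_zero (fun t => (hconst t).differentiableAt)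
    (fun t => (hconst t).deriv) t 0
  simp only [map_zero_eq_one, ofReal_zero, mul_zero, exp_zero, mul_one] at h
  rw [← mul_one (cexp _), ← h, mul_comm (ψ t), ← mul_assoc, ← exp_add]
  simp

lemma exists_linearMap_eq_cexp {E : Type*} [AddCommGroup E] [Module ℝ E] [TopologicalSpace E]
    [ContinuousSMul ℝ E] (ψ : AddChar E ℂ) (hψ : Continuous ψ) :
    ∃ L : E →ₗ[ℝ] ℂ, ∀ v, ψ v = cexp (L v) := by
  have hline (v : E) : ∃ c : ℂ, ∀ t : ℝ, ψ (t • v) = cexp (c * t) :=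
    (ψ.compAddMonoidHom (LinearMap.toSpanSingleton ℝ E v).toAddMonoidHom).exists_eq_cexp_mul
      (hψ.comp (continuous_id.smul continuous_const))
  choose c hc using hline
  have hc_add (v w : E) : c (v + w) = c v + c w := eq_of_forall_cexp_mul_ofReal_eq fun t => by
    rw [← hc, smul_add, map_add_eq_mul, hc, hc, ← exp_add, add_mul]
  have hc_smul (r : ℝ) (v : E) : c (r • v) = r • c v := eq_of_forall_cexp_mul_ofReal_eq fun t => by
    rw [← hc, smul_smul, hc, real_smul]
    push_cast
    ring_nf
  refine ⟨{ toFun := c, map_add' := hc_add, map_smul' := hc_smul }, fun v => ?_⟩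
  simpa using hc v 1

end AddChar

namespace ConvexCone

section Algebraic

variable {E : Type*} [AddCommGroup E] [Module ℝ E] {C : ConvexCone ℝ E} {H : E → ℂ}

lemma nsmul_mem {x : E} (hx : x ∈ C) {n : ℕ} (hn : n ≠ 0) : n • x ∈ C := by
  simpa [Nat.cast_smul_eq_nsmul] using C.smul_mem (Nat.cast_pos.2 (Nat.pos_of_ne_zero hn)) hx

lemma map_nsmul_eq_pow (hmul : ∀ x ∈ C, ∀ y ∈ C, H (x + y) = H x * H y) {x : E} (hx : x ∈ C)
    {n : ℕ} (hn : n ≠ 0) : H (n • x) = H x ^ n := by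
  induction n, Nat.one_le_iff_ne_zero.2 hn using Nat.le_induction with
  | base => simp
  | succ n hn ih =>
    rw [succ_nsmul, hmul _ (C.nsmul_mem hx (by omega)) _ hx, ih (by omega), pow_succ]

lemma div_eq_div_of_add_mem (hmul : ∀ x ∈ C, ∀ y ∈ C, H (x + y) = H x * H y)
    (hH : ∀ x ∈ C, H x ≠ 0) {u u' v : E} (hu : u ∈ C) (hu' : u' ∈ C)
    (huv : u + v ∈ C) (hu'v : u' + v ∈ C) : H (u + v) / H u = H (u' + v) / H u' := by
  rw [div_eq_div_iff (hH u hu) (hH u' hu'), ← hmul _ huv _ hu', ← hmul _ hu'v _ hu]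
  congr 1
  abel

end Algebraic

variable {E : Type*} [AddCommGroup E] [Module ℝ E] [TopologicalSpace E] [ContinuousAdd E]
  [ContinuousSMul ℝ E] {C : ConvexCone ℝ E}

lemma eventually_smul_add_mem (hC : IsOpen (C : Set E)) {x : E} (hx : x ∈ C) (v : E) :
    ∀ᶠ t : ℝ in atTop, t • x + v ∈ C := by
  have hlim : Tendsto (fun t : ℝ => x + t⁻¹ • v) atTop (𝓝 x) := by
    simpa using tendsto_const_nhds.add ((tendsto_inv_atTop_zero (𝕜 := ℝ)).smul_const v)
  filter_upwards [hlim.eventually_mem (hC.mem_nhds hx), eventually_gt_atTop 0] with t ht htpos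
  simpa [smul_add, smul_smul, htpos.ne'] using C.smul_mem htpos ht

lemma exists_add_mem (hC : IsOpen (C : Set E)) (hCne : (C : Set E).Nonempty) (v : E) :
    ∃ w ∈ C, w + v ∈ C := by
  obtain ⟨x, hx⟩ := hCne
  obtain ⟨t, ht, htpos⟩ := ((eventually_smul_add_mem hC hx v).and (eventually_gt_atTop 0)).exists
  exact ⟨t • x, C.smul_mem htpos hx, ht⟩

variable {H : E → ℂ}

lemma ne_zero_of_mem (hC : IsOpen (C : Set E)) (hmul : ∀ x ∈ C, ∀ y ∈ C, H (x + y) = H x * H y)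
    {x₀ : E} (hx₀ : x₀ ∈ C) (hHx₀ : H x₀ ≠ 0) {x : E} (hx : x ∈ C) :
    H x ≠ 0 := by
  obtain ⟨n, hn, hn0⟩ := ((tendsto_natCast_atTop_atTop.eventually
    (eventually_smul_add_mem hC hx₀ (-x))).and (eventually_ne_atTop 0)).exists
  rw [Nat.cast_smul_eq_nsmul, ← sub_eq_add_neg] at hn
  have h := hmul x hx _ hn
  rw [add_sub_cancel, map_nsmul_eq_pow hmul hx₀ hn0] at h
  exact left_ne_zero_of_mul (h ▸ pow_ne_zero n hHx₀)

theorem exists_continuous_addChar_eqOn (hC : IsOpen (C : Set E))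
    (hmul : ∀ x ∈ C, ∀ y ∈ C, H (x + y) = H x * H y) (hCne : (C : Set E).Nonempty)
    (hcont : ContinuousOn H C) (hH : ∀ x ∈ C, H x ≠ 0) :
    ∃ ψ : AddChar E ℂ, Continuous ψ ∧ Set.EqOn ψ H C := by
  choose w hw hwv using exists_add_mem hC hCne
  have hψ (v u : E) (hu : u ∈ C) (huv : u + v ∈ C) : H (w v + v) / H (w v) = H (u + v) / H u :=
    div_eq_div_of_add_mem hmul hH (hw v) hu (hwv v) huv
  let ψ : AddChar E ℂ :=
    { toFun := fun v => H (w v + v) / H (w v)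
      map_zero_eq_one' := by simpa using div_self (hH _ (hw 0))
      map_add_eq_mul' := fun v v' => by
        have hmem : w v + w v' + (v + v') ∈ C := by
          rw [add_add_add_comm]
          exact C.add_mem (hwv v) (hwv v')
        rw [hψ _ _ (C.add_mem (hw v) (hw v')) hmem, add_add_add_comm, hmul _ (hwv v) _ (hwv v'),
          hmul _ (hw v) _ (hw v'), mul_div_mul_comm] }
  refine ⟨ψ, continuous_iff_continuousAt.2 fun v₀ => ?_, fun x hx => ?_⟩
  · have hnear : ∀ᶠ v in 𝓝 v₀, w v₀ + v ∈ C :=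
      ((continuous_const_add (w v₀)).tendsto v₀).eventually_mem (hC.mem_nhds (hwv v₀))
    refine ContinuousAt.congr ?_ (hnear.mono fun v hv => (hψ v _ (hw v₀) hv).symm)
    exact ((hcont.continuousAt (hC.mem_nhds (hwv v₀))).comp
      (continuous_const_add _).continuousAt).div_const _
  · change H (w x + x) / H (w x) = H x
    rw [hmul _ (hw x) _ hx, mul_div_cancel_left₀ _ (hH _ (hw x))]

end ConvexCone

def lightCone (F : Type*) [SeminormedAddCommGroup F] [NormedSpace ℝ F] :
    ConvexCone ℝ (ℝ × F) where
  carrier := {p | ‖p.2‖ < p.1}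
  smul_mem' c hc p hp := by
    simpa [norm_smul, abs_of_pos hc] using mul_lt_mul_of_pos_left hp hc
  add_mem' p hp q hq := (norm_add_le _ _).trans_lt (add_lt_add hp hq)

lemma isOpen_lightCone (F : Type*) [SeminormedAddCommGroup F] [NormedSpace ℝ F] :
    IsOpen (lightCone F : Set (ℝ × F)) :=
  isOpen_lt (continuous_norm.comp continuous_snd) continuous_fst

lemma LinearMap.apply_prod_euclideanSpace {ι M : Type*} [Fintype ι] [DecidableEq ι]
    [AddCommGroup M] [Module ℝ M] (L : ℝ × EuclideanSpace ℝ ι →ₗ[ℝ] M)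
    (p : ℝ × EuclideanSpace ℝ ι) :
    L p = p.1 • L (1, 0) + ∑ j, p.2 j • L (0, EuclideanSpace.single j 1) := by
  have hp : p = p.1 • (1, 0) + ∑ j, p.2 j • ((0 : ℝ), EuclideanSpace.single j (1 : ℝ)) := by
    ext
    · simp [Prod.fst_sum]
    · simp [Prod.snd_sum, WithLp.ofLp_sum, Finset.sum_apply, Pi.single_apply]
  conv_lhs => rw [hp]
  simp only [map_add, map_sum, map_smul]

theorem cone_multiplicative_characterisation_general (d : ℕ)
    (H : ℝ × EuclideanSpace ℝ (Fin d) → ℂ)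
    (hcont : ContinuousOn H {p : ℝ × EuclideanSpace ℝ (Fin d) | ‖p.2‖ < p.1})
    (hmul : ∀ X Y : ℝ × EuclideanSpace ℝ (Fin d), ‖X.2‖ < X.1 → ‖Y.2‖ < Y.1 →
      H X * H Y = H (X + Y))
    (hne : ∃ X : ℝ × EuclideanSpace ℝ (Fin d), ‖X.2‖ < X.1 ∧ H X ≠ 0) :
    ∃ (a : ℂ) (b : Fin d → ℂ), ∀ p : ℝ × EuclideanSpace ℝ (Fin d), ‖p.2‖ < p.1 →
      H p = Complex.exp (a * p.1 + ∑ j, b j * p.2 j) := by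
  obtain ⟨X₀, hX₀, hHX₀⟩ := hne
  have hC := isOpen_lightCone (EuclideanSpace ℝ (Fin d))
  have hmul' : ∀ X ∈ lightCone _, ∀ Y ∈ lightCone _, H (X + Y) = H X * H Y :=
    fun X hX Y hY => (hmul X Y hX hY).symm
  obtain ⟨ψ, hψ, hψH⟩ := ConvexCone.exists_continuous_addChar_eqOn hC hmul' ⟨X₀, hX₀⟩ hcont
    fun X hX => ConvexCone.ne_zero_of_mem hC hmul' hX₀ hHX₀ hX
  obtain ⟨L, hL⟩ := ψ.exists_linearMap_eq_cexp hψ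
  refine ⟨L (1, 0), fun j => L (0, EuclideanSpace.single j 1), fun p hp => ?_⟩
  rw [← hψH hp, hL, L.apply_prod_euclideanSpace]
  simp [Complex.real_smul, mul_comm]

theorem cone_multiplicative_characterisation (d : ℕ) (hd : 2 ≤ d)
    (H : ℝ × EuclideanSpace ℝ (Fin d) → ℂ)
    (hcont : ContinuousOn H {p : ℝ × EuclideanSpace ℝ (Fin d) | ‖p.2‖ < p.1})
    (hmul : ∀ X Y : ℝ × EuclideanSpace ℝ (Fin d), ‖X.2‖ < X.1 → ‖Y.2‖ < Y.1 →
      H X * H Y = H (X + Y))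
    (hne : ∃ X : ℝ × EuclideanSpace ℝ (Fin d), ‖X.2‖ < X.1 ∧ H X ≠ 0) :
    ∃ (a : ℂ) (b : Fin d → ℂ), ∀ p : ℝ × EuclideanSpace ℝ (Fin d), ‖p.2‖ < p.1 →
      H p = Complex.exp (a * p.1 + ∑ j, b j * p.2 j) :=
  cone_multiplicative_characterisation_general d H hcont hmul hne
end

section
/- Let d ≥ 2, and suppose continuous functions g : ℝ^d → ℂ and G : ℝ × ℝ^d → ℂ satisfy g(η₁)g(η₂) = G(|η₁| + |η₂|, η₁ + η₂) for all η₁, η₂ ∈ ℝ^d, with g(0) ≠ 0. Then there exist a, c ∈ ℂ and b ∈ ℂ^d such that g(ξ) = exp(a|ξ| + b·ξ + c) for all ξ ∈ ℝ^d. -/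
/-!
Since `g (η / 2) ^ 2 = g η * g 0`, the continuous function `g` never vanishes, so on the simply
connected space `ℝ^d` it has a continuous logarithm `L`. The functional equation says that
`L η₁ + L η₂` is a function of `(‖η₁‖ + ‖η₂‖, η₁ + η₂)` modulo `2πi`, and exactly so because the
discrepancy is continuous in a common scaling of the `η`'s and vanishes at scale `0`.
Comparing `(s • x, t • x)` with `((s + t) • x, 0)` makes `L` additive, hence homogeneous, along
rays; comparing `(x, -x)` with `(‖x‖ • e, -‖x‖ • e)` for a unit vector `e` gives
`L x + L (-x) - 2 L 0 = 2 a ‖x‖`. Thus `N = L - a ‖·‖ - L 0` is odd and homogeneous, and writing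
`x + y` as `α • u + (-β) • u` with `u` its direction and `α + β = ‖x‖ + ‖y‖` shows that `N` is
additive, i.e. linear.
-/

open Complex

theorem eq_smul_one_of_add_of_nonneg {F : Type*} [NormedAddCommGroup F] [NormedSpace ℝ F]
    {f : ℝ → F} (hf : Continuous f) (hadd : ∀ s t, 0 ≤ s → 0 ≤ t → f (s + t) = f s + f t)
    {t : ℝ} (ht : 0 ≤ t) : f t = t • f 1 := by
  have hf0 : f 0 = 0 := by simpa using hadd 0 0 le_rfl le_rfl
  -- `φ` extends `f` from the half-line to an additive map on `ℝ`
  set φ : ℝ → F := fun s ↦ f (max s 0) - f (max (-s) 0) with hφ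
  have hφ_sub : ∀ a b, 0 ≤ a → 0 ≤ b → φ (a - b) = f a - f b := by
    intro a b ha hb
    rcases le_total b a with hab | hab
    · have := hadd (a - b) b (sub_nonneg.2 hab) hb
      simp only [hφ, max_eq_left (sub_nonneg.2 hab), neg_sub, max_eq_right (sub_nonpos.2 hab),
        hf0, sub_add_cancel] at this ⊢
      rw [this]; abel
    · have := hadd (b - a) a (sub_nonneg.2 hab) ha
      simp only [hφ, max_eq_right (sub_nonpos.2 hab), neg_sub, max_eq_left (sub_nonneg.2 hab),
        hf0, sub_add_cancel] at this ⊢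
      rw [this]; abel
  have hφ_add : ∀ s u, φ (s + u) = φ s + φ u := by
    intro s u
    have : s + u = (max s 0 + max u 0) - (max (-s) 0 + max (-u) 0) := by
      rcases le_total s 0 with hs | hs <;> rcases le_total u 0 with hu | hu <;>
        simp [hs, hu] <;> ring
    rw [this, hφ_sub _ _ (by positivity) (by positivity),
      hadd _ _ (le_max_right _ _) (le_max_right _ _), hadd _ _ (le_max_right _ _) (le_max_right _ _)]
    simp only [hφ]; abel
  have hφc : Continuous φ := by fun_prop
  have := map_real_smul (AddMonoidHom.mk' φ hφ_add) hφc t 1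
  simpa [hφ, ht, hf0] using this

theorem apply_ne_zero_of_mul_self_half {E : Type*} [NormedAddCommGroup E] [NormedSpace ℝ E]
    {f : E → ℂ} (hf : Continuous f)
    (hhalf : ∀ x, f ((2 : ℝ)⁻¹ • x) * f ((2 : ℝ)⁻¹ • x) = f x * f 0) (h0 : f 0 ≠ 0) (x : E) :
    f x ≠ 0 := by
  intro hx
  have hzero : ∀ n : ℕ, f (((2 : ℝ)⁻¹) ^ n • x) = 0 := by
    intro n
    induction n with
    | zero => simpa using hx
    | succ n ih => rw [pow_succ', mul_smul, ← mul_self_eq_zero, hhalf, ih, zero_mul]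
  have hlim : Filter.Tendsto (fun n : ℕ ↦ ((2 : ℝ)⁻¹) ^ n • x) Filter.atTop (nhds 0) := by
    simpa using (tendsto_pow_atTop_nhds_zero_of_lt_one (r := (2 : ℝ)⁻¹) (by norm_num)
      (by norm_num)).smul_const x
  have hconst : f ∘ (fun n : ℕ ↦ ((2 : ℝ)⁻¹) ^ n • x) = fun _ ↦ 0 := funext hzero
  exact h0 (tendsto_nhds_unique ((hf.tendsto 0).comp hlim) (hconst ▸ tendsto_const_nhds))

theorem Continuous.exists_continuous_exp_eq {A : Type*} [TopologicalSpace A]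
    [SimplyConnectedSpace A] [LocallyPathConnectedSpace A] {f : A → ℂ} (hf : Continuous f) (hne : ∀ a, f a ≠ 0) :
    ∃ L : A → ℂ, Continuous L ∧ ∀ a, exp (L a) = f a := by
  obtain ⟨a₀⟩ : Nonempty A := inferInstance
  obtain ⟨L, ⟨-, hL⟩, -⟩ := isCoveringMapOn_exp.existsUnique_continuousMap_lifts ⟨f, hf⟩
    (exp_log (hne a₀)) hne
  exact ⟨L, L.continuous, congrFun hL⟩

theorem eq_of_continuous_of_exp_eq_one {X : Type*} [TopologicalSpace X] [PreconnectedSpace X]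
    {f : X → ℂ} (hf : Continuous f) (h : ∀ x, exp (f x) = 1) (x y : X) : f x = f y := by
  have hdisc : IsDiscrete (AddSubgroup.zmultiples (2 * Real.pi * I) : Set ℂ) := by
    rw [isDiscrete_iff_discreteTopology]
    exact NormedSpace.discreteTopology_zmultiples _
  refine isPreconnected_univ.constant_of_mapsTo hdisc hf.continuousOn (fun z _ ↦ ?_) trivial trivial
  obtain ⟨n, hn⟩ := exp_eq_one_iff.1 (h z)
  exact AddSubgroup.mem_zmultiples_iff.2 ⟨n, by simp [hn]⟩

variable {E F : Type*} [NormedAddCommGroup E] [NormedAddCommGroup F]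

/-- `L η₁ + L η₂` is a function of the point `(‖η₁‖ + ‖η₂‖, η₁ + η₂)` of the solid cone. -/
def IsConeAdditive (L : E → F) : Prop :=
  ∀ η₁ η₂ ζ₁ ζ₂ : E, ‖η₁‖ + ‖η₂‖ = ‖ζ₁‖ + ‖ζ₂‖ → η₁ + η₂ = ζ₁ + ζ₂ → L η₁ + L η₂ = L ζ₁ + L ζ₂

namespace IsConeAdditive

variable {L : E → F}

theorem sub_const (hL : IsConeAdditive L) (c : F) : IsConeAdditive (fun x ↦ L x - c) := by
  intro η₁ η₂ ζ₁ ζ₂ hnorm hsum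
  simp only [sub_add_sub_comm, hL η₁ η₂ ζ₁ ζ₂ hnorm hsum]

variable [NormedSpace ℝ F]

theorem sub_norm_smul (hL : IsConeAdditive L) (a : F) :
    IsConeAdditive (fun x ↦ L x - ‖x‖ • a) := by
  intro η₁ η₂ ζ₁ ζ₂ hnorm hsum
  simp only [sub_add_sub_comm, ← add_smul, hnorm, hL η₁ η₂ ζ₁ ζ₂ hnorm hsum]

variable [NormedSpace ℝ E]

theorem map_smul_of_nonneg (hL : IsConeAdditive L) (hc : Continuous L) (h0 : L 0 = 0) {t : ℝ}
    (ht : 0 ≤ t) (x : E) : L (t • x) = t • L x := by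
  have hray : ∀ s u : ℝ, 0 ≤ s → 0 ≤ u → L ((s + u) • x) = L (s • x) + L (u • x) := by
    intro s u hs hu
    rw [hL (s • x) (u • x) ((s + u) • x) 0, h0, add_zero]
    · simp [norm_smul, abs_of_nonneg, hs, hu, add_nonneg, add_mul]
    · rw [add_zero, add_smul]
  simpa using eq_smul_one_of_add_of_nonneg (f := fun s : ℝ ↦ L (s • x)) (by fun_prop) hray ht

theorem map_add_map_neg (hL : IsConeAdditive L) (hc : Continuous L) (h0 : L 0 = 0) {e : E}
    (he : ‖e‖ = 1) (x : E) : L x + L (-x) = ‖x‖ • (L e + L (-e)) := by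
  rw [hL x (-x) (‖x‖ • e) (‖x‖ • -e), hL.map_smul_of_nonneg hc h0 (norm_nonneg x),
    hL.map_smul_of_nonneg hc h0 (norm_nonneg x), smul_add]
  · simp [norm_smul, he]
  · simp

theorem map_smul_of_map_neg (hL : IsConeAdditive L) (hc : Continuous L) (h0 : L 0 = 0)
    (hneg : ∀ x, L (-x) = -L x) (t : ℝ) (x : E) : L (t • x) = t • L x := by
  rcases le_total 0 t with ht | ht
  · exact hL.map_smul_of_nonneg hc h0 ht x
  · simpa [hneg] using hL.map_smul_of_nonneg hc h0 (neg_nonneg.2 ht) (-x)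

theorem isLinearMap (hL : IsConeAdditive L) (hsmul : ∀ (t : ℝ) x, L (t • x) = t • L x) :
    IsLinearMap ℝ L := by
  refine ⟨fun x y ↦ ?_, hsmul⟩
  by_cases hxy : x + y = 0
  · obtain rfl := eq_neg_of_add_eq_zero_right hxy
    have hneg : L (-x) = -L x := by simpa using hsmul (-1) x
    rw [add_neg_cancel, hneg, add_neg_cancel]
    simpa using hsmul 0 0
  obtain ⟨u, hu, hxu⟩ : ∃ u : E, ‖u‖ = 1 ∧ ‖x + y‖ • u = x + y :=
    ⟨_, norm_smul_inv_norm hxy, smul_inv_smul₀ (norm_ne_zero_iff.2 hxy) _⟩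
  set α : ℝ := (‖x‖ + ‖y‖ + ‖x + y‖) / 2
  set β : ℝ := (‖x‖ + ‖y‖ - ‖x + y‖) / 2
  have hβ : 0 ≤ β := by have := norm_add_le x y; simp only [β]; linarith
  have hα : 0 ≤ α := by positivity
  have hαβ : α + -β = ‖x + y‖ := by simp only [α, β]; ring
  rw [hL x y (α • u) ((-β) • u), hsmul, hsmul, ← add_smul, hαβ, ← hsmul, hxu]
  · simp only [norm_smul, hu, Real.norm_eq_abs, abs_neg, abs_of_nonneg hα, abs_of_nonneg hβ, α, β]
    ring
  · rw [← add_smul, hαβ, hxu]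

theorem exists_eq_norm_smul_add_linearMap (hL : IsConeAdditive L) (hc : Continuous L) :
    ∃ (a : F) (ℓ : E →ₗ[ℝ] F), ∀ x, L x = ‖x‖ • a + ℓ x + L 0 := by
  set L₀ : E → F := fun x ↦ L x - L 0
  have hL₀ : IsConeAdditive L₀ := hL.sub_const (L 0)
  have hL₀c : Continuous L₀ := by fun_prop
  have hL₀0 : L₀ 0 = 0 := sub_self _
  rcases subsingleton_or_nontrivial E with hE | hE
  · exact ⟨0, 0, fun x ↦ by simp [Subsingleton.elim x 0]⟩
  obtain ⟨e, he⟩ := exists_norm_eq E zero_le_one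
  set a : F := (2 : ℝ)⁻¹ • (L₀ e + L₀ (-e))
  set N : E → F := fun x ↦ L₀ x - ‖x‖ • a
  have hN : IsConeAdditive N := hL₀.sub_norm_smul a
  have hNneg : ∀ x, N (-x) = -N x := by
    intro x
    have := hL₀.map_add_map_neg hL₀c hL₀0 he x
    simp only [N, a, norm_neg]
    linear_combination (norm := module) this
  have hNlin : IsLinearMap ℝ N :=
    hN.isLinearMap (hN.map_smul_of_map_neg (by fun_prop) (by simp [N, hL₀0]) hNneg)
  exact ⟨a, hNlin.mk', fun x ↦ by simp [N, L₀]⟩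

end IsConeAdditive

variable [NormedSpace ℝ E]

theorem isConeAdditive_of_exp_add {L : E → ℂ} (hL : Continuous L)
    (h : ∀ η₁ η₂ ζ₁ ζ₂ : E, ‖η₁‖ + ‖η₂‖ = ‖ζ₁‖ + ‖ζ₂‖ → η₁ + η₂ = ζ₁ + ζ₂ →
      exp (L η₁ + L η₂) = exp (L ζ₁ + L ζ₂)) :
    IsConeAdditive L := by
  intro η₁ η₂ ζ₁ ζ₂ hnorm hsum
  -- the hypotheses survive scaling by `t`, and the relation is trivial at `t = 0`
  have hD : ∀ t : ℝ, exp (L (t • η₁) + L (t • η₂) - (L (t • ζ₁) + L (t • ζ₂))) = 1 := by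
    intro t
    rw [exp_sub, h (t • η₁) (t • η₂) (t • ζ₁) (t • ζ₂), div_self (exp_ne_zero _)]
    · simp only [norm_smul, ← mul_add, hnorm]
    · rw [← smul_add, ← smul_add, hsum]
  have := eq_of_continuous_of_exp_eq_one (by fun_prop) hD 1 0
  simpa [sub_eq_zero] using this

theorem functional_equation_maximisers_general (d : ℕ)
    (g : EuclideanSpace ℝ (Fin d) → ℂ) (G : ℝ × EuclideanSpace ℝ (Fin d) → ℂ)
    (hg : Continuous g)
    (heq : ∀ η₁ η₂ : EuclideanSpace ℝ (Fin d), g η₁ * g η₂ = G (‖η₁‖ + ‖η₂‖, η₁ + η₂))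
    (h0 : g 0 ≠ 0) :
    ∃ (a c : ℂ) (b : Fin d → ℂ), ∀ ξ : EuclideanSpace ℝ (Fin d),
      g ξ = Complex.exp (a * ‖ξ‖ + ∑ j, b j * ξ j + c) := by
  have hne : ∀ x, g x ≠ 0 := apply_ne_zero_of_mul_self_half hg (fun x ↦ by
    rw [heq, heq, ← add_smul, ← two_mul, norm_smul]
    norm_num [← mul_assoc]) h0
  obtain ⟨L, hLc, hL⟩ := hg.exists_continuous_exp_eq hne
  have hcone : IsConeAdditive L := isConeAdditive_of_exp_add hLc fun η₁ η₂ ζ₁ ζ₂ hnorm hsum ↦ by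
    rw [exp_add, exp_add, hL, hL, hL, hL, heq, heq, hnorm, hsum]
  obtain ⟨a, ℓ, hℓ⟩ := hcone.exists_eq_norm_smul_add_linearMap hLc
  refine ⟨a, L 0, fun j ↦ ℓ (EuclideanSpace.single j 1), fun ξ ↦ ?_⟩
  have hℓξ : ℓ ξ = ∑ j, ℓ (EuclideanSpace.single j 1) * ξ j := by
    conv_lhs => rw [← (EuclideanSpace.basisFun (Fin d) ℝ).sum_repr ξ]
    simp [Complex.real_smul, mul_comm]
  rw [← hL, hℓ, hℓξ, Complex.real_smul, mul_comm]

theorem functional_equation_maximisers (d : ℕ) (hd : 2 ≤ d)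
    (g : EuclideanSpace ℝ (Fin d) → ℂ) (G : ℝ × EuclideanSpace ℝ (Fin d) → ℂ)
    (hg : Continuous g) (hG : Continuous G)
    (heq : ∀ η₁ η₂ : EuclideanSpace ℝ (Fin d), g η₁ * g η₂ = G (‖η₁‖ + ‖η₂‖, η₁ + η₂))
    (h0 : g 0 ≠ 0) :
    ∃ (a c : ℂ) (b : Fin d → ℂ), ∀ ξ : EuclideanSpace ℝ (Fin d),
      g ξ = Complex.exp (a * ‖ξ‖ + ∑ j, b j * ξ j + c) :=
  functional_equation_maximisers_general d g G hg heq h0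
end
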